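/- Let B be a Hermitian matrix, u a unit vector with α = ⟨Bu, u⟩, and s = u + τ(I - uu*)t a minimizer of the Rayleigh quotient ρ over span{u, (I - uu*)t}. With J := (I - uu*)(B - ρ(s)I)(I - uu*), one has (B - ρ(s)I)s = (B - αI)u + J(s - u). -/

import Mathlib

open Matrix
open scoped ComplexConjugate

/-!
Write `M = B - ρ(s) I`. The Hermitian form `x ↦ ⟨x, M x⟩` is nonnegative on `span {u, w}`
(this is the minimality of `ρ(s)`) and vanishes at `s`, so it is stationary there in the
direction `u`: `⟨u, M s⟩ = 0`. As `s - u = τ w` is orthogonal to `u`,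
`J (s - u) = (I - uu*) M (s - u) = M (s - u) + ⟨u, M u⟩ u = M (s - u) + (α - ρ(s)) u`,
and adding `(B - α I) u = M u + (ρ(s) - α) u` gives `M s`.
-/

/-- Squared Euclidean norm of a complex vector. -/
noncomputable def nsq {k : ℕ} (x : Fin k → ℂ) : ℝ := ∑ i, ‖x i‖ ^ 2

/-- Standard Hermitian inner product (conjugate-linear in the first argument). -/
noncomputable def cip {k : ℕ} (x y : Fin k → ℂ) : ℂ := ∑ i, conj (x i) * y i

/-- Orthogonal projection `(I - yy*) v`. -/
noncomputable def proj {k : ℕ} (y v : Fin k → ℂ) : Fin k → ℂ := v - cip y v • y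

/-- Rayleigh quotient of a vector with respect to a (Hermitian) matrix. -/
noncomputable def rq {k : ℕ} (B : Matrix (Fin k) (Fin k) ℂ) (x : Fin k → ℂ) : ℝ :=
  (cip (B.mulVec x) x).re / nsq x

section
variable {k : ℕ}

theorem cip_eq_star_dotProduct (x y : Fin k → ℂ) : cip x y = star x ⬝ᵥ y := rfl

theorem conj_cip (x y : Fin k → ℂ) : conj (cip x y) = cip y x := by
  simp [cip, map_sum, mul_comm]

theorem cip_self (x : Fin k → ℂ) : cip x x = nsq x := by
  simp [cip, nsq, Complex.conj_mul']

open scoped ComplexOrder in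
theorem nsq_pos {x : Fin k → ℂ} (hx : x ≠ 0) : 0 < nsq x := by
  have := dotProduct_star_self_pos_iff.2 hx
  rw [← cip_eq_star_dotProduct, cip_self] at this
  exact_mod_cast this

theorem cip_add_left (x y z : Fin k → ℂ) : cip (x + y) z = cip x z + cip y z := by
  simp only [cip_eq_star_dotProduct, star_add, add_dotProduct]

theorem cip_add_right (x y z : Fin k → ℂ) : cip x (y + z) = cip x y + cip x z := by
  simp only [cip_eq_star_dotProduct, dotProduct_add]

theorem cip_sub_right (x y z : Fin k → ℂ) : cip x (y - z) = cip x y - cip x z := by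
  simp only [cip_eq_star_dotProduct, dotProduct_sub]

theorem cip_smul_left (a : ℂ) (x y : Fin k → ℂ) : cip (a • x) y = conj a * cip x y := by
  simp only [cip_eq_star_dotProduct, star_smul, smul_dotProduct, smul_eq_mul, Complex.star_def]

theorem cip_smul_right (a : ℂ) (x y : Fin k → ℂ) : cip x (a • y) = a * cip x y := by
  simp only [cip_eq_star_dotProduct, dotProduct_smul, smul_eq_mul]

theorem Matrix.IsHermitian.cip_mulVec {M : Matrix (Fin k) (Fin k) ℂ} (hM : M.IsHermitian)
    (x y : Fin k → ℂ) : cip (M *ᵥ x) y = cip x (M *ᵥ y) := by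
  rw [cip_eq_star_dotProduct, star_mulVec, hM.eq, ← dotProduct_mulVec, cip_eq_star_dotProduct]

theorem one_sub_vecMulVec_mulVec (u v : Fin k → ℂ) :
    (1 - vecMulVec u (star u)) *ᵥ v = proj u v := by
  rw [sub_mulVec, one_mulVec, vecMulVec_mulVec, op_smul_eq_smul, proj, cip_eq_star_dotProduct]

theorem cip_proj {u : Fin k → ℂ} (hu : cip u u = 1) (v : Fin k → ℂ) :
    cip u (proj u v) = 0 := by
  rw [proj, cip_sub_right, cip_smul_right, hu, mul_one, sub_self]

theorem proj_of_cip_eq_zero {u v : Fin k → ℂ} (h : cip u v = 0) : proj u v = v := by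
  rw [proj, h, zero_smul, sub_zero]

theorem Matrix.IsHermitian.re_cip_mulVec_add_smul {M : Matrix (Fin k) (Fin k) ℂ}
    (hM : M.IsHermitian) (s u : Fin k → ℂ) (ε : ℂ) :
    (cip (M *ᵥ (s + ε • u)) (s + ε • u)).re = (cip (M *ᵥ s) s).re
      + 2 * (conj ε * cip u (M *ᵥ s)).re + ‖ε‖ ^ 2 * (cip (M *ᵥ u) u).re := by
  rw [mulVec_add, mulVec_smul, cip_add_left, cip_add_right, cip_add_right, cip_smul_left,
    cip_smul_left, cip_smul_right, cip_smul_right, hM.cip_mulVec u s, ← conj_cip (M *ᵥ s) u,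
    ← mul_assoc, Complex.conj_mul']
  simp only [Complex.add_re, Complex.mul_re, Complex.conj_re, Complex.conj_im]
  norm_cast
  ring

theorem Matrix.IsHermitian.cip_mulVec_eq_zero_of_forall_re_cip_le {M : Matrix (Fin k) (Fin k) ℂ}
    (hM : M.IsHermitian) {s u : Fin k → ℂ}
    (h : ∀ ε : ℂ, (cip (M *ᵥ s) s).re ≤ (cip (M *ᵥ (s + ε • u)) (s + ε • u)).re) :
    cip u (M *ᵥ s) = 0 := by
  set γ := cip u (M *ᵥ s)
  -- along the real line `ε = δ γ` the form grows by a quadratic in `δ` with linear term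
  -- `2 ‖γ‖² δ`; it can stay nonnegative only if that term vanishes
  have hquad : ∀ δ : ℝ,
      0 ≤ (‖γ‖ ^ 2 * (cip (M *ᵥ u) u).re) * (δ * δ) + 2 * ‖γ‖ ^ 2 * δ + 0 := by
    intro δ
    have := h (δ * γ)
    rw [hM.re_cip_mulVec_add_smul, map_mul, Complex.conj_ofReal, mul_assoc, Complex.conj_mul',
      norm_mul, Complex.norm_real, Real.norm_eq_abs] at this
    norm_cast at this
    rw [mul_pow, sq_abs] at this
    linarith
  have hdiscr := discrim_le_zero hquad
  rw [discrim, mul_zero, sub_zero] at hdiscr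
  have : 2 * ‖γ‖ ^ 2 = 0 := pow_eq_zero_iff two_ne_zero |>.1 (le_antisymm hdiscr (sq_nonneg _))
  simpa using this

theorem re_cip_sub_smul_one_mulVec (B : Matrix (Fin k) (Fin k) ℂ) (ρ : ℝ) (x : Fin k → ℂ) :
    (cip ((B - (ρ : ℂ) • 1) *ᵥ x) x).re = (cip (B *ᵥ x) x).re - ρ * nsq x := by
  rw [sub_mulVec, smul_mulVec, one_mulVec, sub_eq_add_neg _ ((ρ : ℂ) • x), ← neg_smul,
    cip_add_left, cip_smul_left, cip_self]
  simp [sub_eq_add_neg]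

theorem le_rq_iff {B : Matrix (Fin k) (Fin k) ℂ} {x : Fin k → ℂ} (hx : x ≠ 0) (ρ : ℝ) :
    ρ ≤ rq B x ↔ 0 ≤ (cip ((B - (ρ : ℂ) • 1) *ᵥ x) x).re := by
  rw [re_cip_sub_smul_one_mulVec, rq, le_div_iff₀ (nsq_pos hx), sub_nonneg]

theorem re_cip_sub_rq_smul_one_mulVec_self (B : Matrix (Fin k) (Fin k) ℂ) {x : Fin k → ℂ}
    (hx : x ≠ 0) : (cip ((B - (rq B x : ℂ) • 1) *ᵥ x) x).re = 0 := by
  rw [re_cip_sub_smul_one_mulVec, rq, div_mul_cancel₀ _ (nsq_pos hx).ne', sub_self]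

theorem Matrix.IsHermitian.cip_sub_rq_smul_one_mulVec_eq_zero {B : Matrix (Fin k) (Fin k) ℂ}
    (hB : B.IsHermitian) {s u : Fin k → ℂ} (hs : s ≠ 0)
    (hmin : ∀ ε : ℂ, s + ε • u ≠ 0 → rq B s ≤ rq B (s + ε • u)) :
    cip u ((B - (rq B s : ℂ) • 1) *ᵥ s) = 0 := by
  have hM : (B - (rq B s : ℂ) • 1).IsHermitian :=
    hB.sub (isHermitian_one.smul (Complex.conj_ofReal _))
  refine hM.cip_mulVec_eq_zero_of_forall_re_cip_le fun ε => ?_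
  rw [re_cip_sub_rq_smul_one_mulVec_self B hs]
  by_cases hx : s + ε • u = 0
  · simp [hx, cip]
  · exact (le_rq_iff hx _).1 (hmin ε hx)

theorem sub_smul_one_mulVec_eq_add_compression_mulVec (B : Matrix (Fin k) (Fin k) ℂ) (ρ : ℂ)
    {u s : Fin k → ℂ} (hu : cip u u = 1) (hsu : cip u (s - u) = 0)
    (hs : cip u ((B - ρ • 1) *ᵥ s) = 0) :
    (B - ρ • 1) *ᵥ s = (B - cip u (B *ᵥ u) • 1) *ᵥ u +
      ((1 - vecMulVec u (star u)) * (B - ρ • 1) * (1 - vecMulVec u (star u))) *ᵥ (s - u) := by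
  set M := B - ρ • 1
  have hMu : cip u (M *ᵥ u) = cip u (B *ᵥ u) - ρ := by
    rw [sub_mulVec, smul_mulVec, one_mulVec, cip_sub_right, cip_smul_right, hu, mul_one]
  have hcompression : ((1 - vecMulVec u (star u)) * M * (1 - vecMulVec u (star u))) *ᵥ (s - u)
      = M *ᵥ (s - u) + cip u (M *ᵥ u) • u := by
    rw [← mulVec_mulVec, ← mulVec_mulVec, one_sub_vecMulVec_mulVec u (s - u),
      proj_of_cip_eq_zero hsu, one_sub_vecMulVec_mulVec, proj, mulVec_sub, cip_sub_right, hs,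
      zero_sub, neg_smul, sub_neg_eq_add]
  rw [hcompression, hMu, mulVec_sub]
  simp only [M, sub_mulVec, smul_mulVec, one_mulVec]
  module

end

theorem stmt5_general {k : ℕ} (B : Matrix (Fin k) (Fin k) ℂ) (hB : Bᴴ = B)
    (u t : Fin k → ℂ) (hu : nsq u = 1)
    (w : Fin k → ℂ) (hw : w = proj u t)
    (τ : ℂ)
    (s : Fin k → ℂ) (hs : s = u + τ • w)
    (hmin : ∀ a b : ℂ, a • u + b • w ≠ 0 → rq B s ≤ rq B (a • u + b • w))
    (J : Matrix (Fin k) (Fin k) ℂ)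
    (hJ : J = (1 - vecMulVec u (star u)) * (B - ((rq B s : ℝ) : ℂ) • 1) *
      (1 - vecMulVec u (star u))) :
    (B - ((rq B s : ℝ) : ℂ) • 1).mulVec s
      = (B - cip (B.mulVec u) u • 1).mulVec u + J.mulVec (s - u) := by
  have hB : B.IsHermitian := hB
  have huu : cip u u = 1 := by rw [cip_self, hu, Complex.ofReal_one]
  have hsu : s - u = τ • w := by rw [hs, add_sub_cancel_left]
  have husu : cip u (s - u) = 0 := by rw [hsu, cip_smul_right, hw, cip_proj huu, mul_zero]
  have hs0 : s ≠ 0 := by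
    rintro rfl
    rw [zero_sub, ← neg_one_smul ℂ, cip_smul_right, huu] at husu
    norm_num at husu
  have hstationary : cip u ((B - ((rq B s : ℝ) : ℂ) • 1) *ᵥ s) = 0 := by
    refine hB.cip_sub_rq_smul_one_mulVec_eq_zero hs0 fun ε hε => ?_
    have hline : s + ε • u = (1 + ε) • u + τ • w := by rw [hs]; module
    rw [hline] at hε ⊢
    exact hmin _ _ hε
  rw [hJ, hB.cip_mulVec u u]
  exact sub_smul_one_mulVec_eq_add_compression_mulVec B _ huu husu hstationary

theorem stmt5 {k : ℕ} (B : Matrix (Fin k) (Fin k) ℂ) (hB : Bᴴ = B)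
    (u t : Fin k → ℂ) (hu : nsq u = 1)
    (w : Fin k → ℂ) (hw : w = proj u t)
    (τ : ℂ) (hτ : τ ≠ 0)
    (s : Fin k → ℂ) (hs : s = u + τ • w)
    (hmin : ∀ a b : ℂ, a • u + b • w ≠ 0 → rq B s ≤ rq B (a • u + b • w))
    (J : Matrix (Fin k) (Fin k) ℂ)
    (hJ : J = (1 - vecMulVec u (star u)) * (B - ((rq B s : ℝ) : ℂ) • 1) *
      (1 - vecMulVec u (star u))) :
    (B - ((rq B s : ℝ) : ℂ) • 1).mulVec s
      = (B - cip (B.mulVec u) u • 1).mulVec u + J.mulVec (s - u) :=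
  stmt5_general B hB u t hu w hw τ s hs hmin J hJ
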